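/- arXiv:1210.3009 — 7 statements merged into one kernel-verified Lean document; each statement's English description precedes it below -/
import Mathlib

section
/- Let P, Q ∈ ℍ and let Σ : ℍ → ℍ be the ℝ-linear map Σ(X) = PX + XQ. Then Σ is not bijective if and only if P and −Q are similar quaternions, i.e. Re(P) = Re(−Q) and |P| = |−Q|. -/
/-!
Let `c = P² + 2 Re(Q) P + |Q|²` be the value at `-P` of the reduced characteristic polynomial
`t² - 2 Re(Q) t + |Q|²` of `Q`. Since `Q + Q̄ = 2 Re Q` and `Q̄ Q = |Q|²` are real, both composites
of `Σ = Σ_{P,Q}` with `Σ_{P,Q̄}` are left multiplication by `c`, so `Σ` is bijective as soon as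
`c ≠ 0`. If `c = 0` and `Σ` were injective, then `Σ_{P,Q̄} = 0`: evaluating at `1` gives `Q̄ = -P`,
and then `P` commutes with everything, so `P` is real and `Σ 1 = P + Q = 0`. A direct computation
shows that `c = 0` exactly when `Re P = -Re Q` and `|P| = |Q|`.
-/

open Function

namespace Quaternion

variable {R : Type*}

section CommRing

variable [CommRing R]

def sylvester (P Q X : ℍ[R]) : ℍ[R] := P * X + X * Q

def charEval (Q X : ℍ[R]) : ℍ[R] := X * X - ↑(2 * Q.re) * X + ↑(normSq Q)

theorem charEval_star (Q X : ℍ[R]) : charEval (star Q) X = charEval Q X := by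
  rw [charEval, charEval, re_star, normSq_star]

theorem sylvester_zero (P Q : ℍ[R]) : sylvester P Q 0 = 0 := by
  simp only [sylvester, mul_zero, zero_mul, add_zero]

theorem sylvester_sylvester_star (P Q X : ℍ[R]) :
    sylvester P Q (sylvester P (star Q) X) = charEval Q (-P) * X := by
  ext <;>
    simp only [sylvester, charEval, normSq_def', re_add, re_sub, re_mul, re_coe, re_neg, re_star,
      imI_add, imI_sub, imI_mul, imI_coe, imI_neg, imI_star, imJ_add, imJ_sub, imJ_mul, imJ_coe,
      imJ_neg, imJ_star, imK_add, imK_sub, imK_mul, imK_coe, imK_neg, imK_star] <;>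
    ring

theorem sylvester_star_sylvester (P Q X : ℍ[R]) :
    sylvester P (star Q) (sylvester P Q X) = charEval Q (-P) * X := by
  simpa only [star_star, charEval_star] using sylvester_sylvester_star P (star Q) X

theorem bijective_sylvester_of_isUnit {P Q : ℍ[R]} (hc : IsUnit (charEval Q (-P))) :
    Bijective (sylvester P Q) := by
  have hmul : Bijective (charEval Q (-P) * ·) := (Units.mulLeft hc.unit).bijective
  refine ⟨.of_comp (f := sylvester P (star Q)) ?_, .of_comp (g := sylvester P (star Q)) ?_⟩
  · simpa only [comp_def, sylvester_star_sylvester] using hmul.injective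
  · simpa only [comp_def, sylvester_sylvester_star] using hmul.surjective

end CommRing

section LinearOrderedField

variable [Field R] [LinearOrder R] [IsStrictOrderedRing R]

theorem star_eq_self_of_forall_mul_comm {P : ℍ[R]} (h : ∀ X, P * X = X * P) : star P = P := by
  have hi := congrArg (·.imK) (h ((equivProd R).symm (0, 1, 0, 0)))
  have hj := congrArg (·.imK) (h ((equivProd R).symm (0, 0, 1, 0)))
  have hk := congrArg (·.imJ) (h ((equivProd R).symm (0, 1, 0, 0)))
  simp only [imJ_mul, imK_mul, re_equivProd_symm_apply, imI_equivProd_symm_apply,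
    imJ_equivProd_symm_apply, imK_equivProd_symm_apply] at hi hj hk
  ext <;> simp only [re_star, imI_star, imJ_star, imK_star] <;> linarith

theorem not_bijective_sylvester_of_charEval_eq_zero {P Q : ℍ[R]} (hc : charEval Q (-P) = 0) :
    ¬ Bijective (sylvester P Q) := by
  intro hbij
  have hvanish (X : ℍ[R]) : sylvester P (star Q) X = 0 :=
    hbij.injective <| by rw [sylvester_sylvester_star, hc, zero_mul, sylvester_zero]
  have hQ : star Q = -P := eq_neg_of_add_eq_zero_right (by simpa [sylvester] using hvanish 1)
  have hP : star P = P := star_eq_self_of_forall_mul_comm fun X ↦ by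
    simpa [sylvester, hQ, add_neg_eq_zero] using hvanish X
  have h1 : sylvester P Q 1 = 0 := by
    simpa [sylvester, hP, add_comm] using congrArg star (hvanish 1)
  exact one_ne_zero (hbij.injective (h1.trans (sylvester_zero P Q).symm))

theorem charEval_neg_eq_zero_iff {P Q : ℍ[R]} :
    charEval Q (-P) = 0 ↔ P.re = -Q.re ∧ normSq P = normSq Q := by
  simp only [Quaternion.ext_iff, charEval, normSq_def', re_sub, re_add, re_mul, re_coe, re_neg,
    imI_sub, imI_add, imI_mul, imI_coe, imI_neg, imJ_sub, imJ_add, imJ_mul, imJ_coe, imJ_neg,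
    imK_sub, imK_add, imK_mul, imK_coe, imK_neg, re_zero, imI_zero, imJ_zero, imK_zero]
  constructor
  · rintro ⟨hre, hi, hj, hk⟩
    set s := P.re + Q.re
    have hs : s = 0 := by
      have : s ^ 4 + s ^ 2 * (Q.imI ^ 2 + Q.imJ ^ 2 + Q.imK ^ 2) = 0 := by
        linear_combination
          s ^ 2 * hre + s * P.imI * hi / 2 + s * P.imJ * hj / 2 + s * P.imK * hk / 2
      exact pow_eq_zero_iff four_ne_zero |>.mp
        ((add_eq_zero_iff_of_nonneg (by positivity) (by positivity)).mp this).1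
    exact ⟨by linear_combination hs, by linear_combination 2 * P.re * hs - hre⟩
  · rintro ⟨h, hn⟩
    refine ⟨?_, ?_, ?_, ?_⟩
    · linear_combination 2 * P.re * h - hn
    · linear_combination 2 * P.imI * h
    · linear_combination 2 * P.imJ * h
    · linear_combination 2 * P.imK * h

theorem not_bijective_sylvester_iff {P Q : ℍ[R]} :
    ¬ Bijective (sylvester P Q) ↔ P.re = -Q.re ∧ normSq P = normSq Q := by
  rw [← charEval_neg_eq_zero_iff]
  refine ⟨fun h ↦ ?_, not_bijective_sylvester_of_charEval_eq_zero⟩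
  by_contra hc
  exact h (bijective_sylvester_of_isUnit (Ne.isUnit hc))

end LinearOrderedField

end Quaternion

theorem stmt_2 (P Q : Quaternion ℝ) :
    ¬ Function.Bijective (fun X : Quaternion ℝ => P * X + X * Q) ↔
      (P.re = (-Q).re ∧ ‖P‖ = ‖-Q‖) := by
  rw [Quaternion.re_neg, norm_neg, ← mul_self_inj (norm_nonneg P) (norm_nonneg Q),
    ← Quaternion.normSq_eq_norm_mul_self, ← Quaternion.normSq_eq_norm_mul_self]
  exact Quaternion.not_bijective_sylvester_iff
end

section
/- Let P = t + xi + yj + zk and Q = s + ui + vj + wk be quaternions. The determinant of the real 4×4 matrix representing the ℝ-linear map X ↦ PX + XQ equals (t+s)⁴ + 2(t+s)²(x²+y²+z²+u²+v²+w²) + (x²+y²+z² − u²−v²−w²)², and in particular this determinant is nonnegative. -/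
/-! In the basis `1, i, j, k`, the map `X ↦ pX + Xq` has matrix `(re p + re q) • 1` plus an
antisymmetric part whose entries are sums and differences of the imaginary parts of `p` and `q`.
Expanding this `4 × 4` determinant gives a polynomial identity valid over any commutative ring,
and over an ordered ring its right-hand side is a sum of products of squares. -/

open Quaternion Matrix

theorem Matrix.det_fin_four_of {R : Type*} [CommRing R] (a b c d e f g h i j k l m n o p : R) :
    det !![a, b, c, d; e, f, g, h; i, j, k, l; m, n, o, p] =
      a * f * k * p - a * f * l * o - a * g * j * p + a * g * l * n + a * h * j * o -
        a * h * k * n - b * e * k * p + b * e * l * o + b * g * i * p - b * g * l * m -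
        b * h * i * o + b * h * k * m + c * e * j * p - c * e * l * n - c * f * i * p +
        c * f * l * m + c * h * i * n - c * h * j * m - d * e * j * o + d * e * k * n +
        d * f * i * o - d * f * k * m - d * g * i * n + d * g * j * m := by
  simp [det_succ_row_zero, Fin.sum_univ_succ, Fin.succAbove]
  ring

namespace Quaternion

section CommRing

variable {R : Type*} [CommRing R]

noncomputable def basisOneIJK : Module.Basis (Fin 4) R ℍ[R] :=
  QuaternionAlgebra.basisOneIJK (-1 : R) 0 (-1)

theorem basisOneIJK_repr (q : ℍ[R]) : basisOneIJK.repr q = ![q.re, q.imI, q.imJ, q.imK] := rfl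

theorem components_basisOneIJK (j : Fin 4) :
    ![(basisOneIJK j).re, (basisOneIJK j).imI, (basisOneIJK j).imJ, (basisOneIJK j).imK] =
      (Pi.single j 1 : Fin 4 → R) := by
  rw [← basisOneIJK_repr, Module.Basis.repr_self, Finsupp.single_eq_pi_single]

@[simp]
theorem re_basisOneIJK (j : Fin 4) : (basisOneIJK j).re = (Pi.single j 1 : Fin 4 → R) 0 :=
  congrFun (components_basisOneIJK j) 0

@[simp]
theorem imI_basisOneIJK (j : Fin 4) : (basisOneIJK j).imI = (Pi.single j 1 : Fin 4 → R) 1 :=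
  congrFun (components_basisOneIJK j) 1

@[simp]
theorem imJ_basisOneIJK (j : Fin 4) : (basisOneIJK j).imJ = (Pi.single j 1 : Fin 4 → R) 2 :=
  congrFun (components_basisOneIJK j) 2

@[simp]
theorem imK_basisOneIJK (j : Fin 4) : (basisOneIJK j).imK = (Pi.single j 1 : Fin 4 → R) 3 :=
  congrFun (components_basisOneIJK j) 3

theorem toMatrix_mulLeft_add_mulRight (p q : ℍ[R]) :
    LinearMap.toMatrix basisOneIJK basisOneIJK (LinearMap.mulLeft R p + LinearMap.mulRight R q) =
      !![p.re + q.re, -(p.imI + q.imI), -(p.imJ + q.imJ), -(p.imK + q.imK);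
         p.imI + q.imI, p.re + q.re, q.imK - p.imK, p.imJ - q.imJ;
         p.imJ + q.imJ, p.imK - q.imK, p.re + q.re, q.imI - p.imI;
         p.imK + q.imK, q.imJ - p.imJ, p.imI - q.imI, p.re + q.re] := by
  ext i j
  simp only [LinearMap.toMatrix_apply, basisOneIJK_repr, LinearMap.add_apply,
    LinearMap.mulLeft_apply, LinearMap.mulRight_apply]
  fin_cases i <;> fin_cases j <;> simp [re_mul, imI_mul, imJ_mul, imK_mul] <;> ring

theorem det_mulLeft_add_mulRight (p q : ℍ[R]) :
    LinearMap.det (LinearMap.mulLeft R p + LinearMap.mulRight R q) =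
      (p.re + q.re) ^ 4 +
        2 * (p.re + q.re) ^ 2 *
          (p.imI ^ 2 + p.imJ ^ 2 + p.imK ^ 2 + q.imI ^ 2 + q.imJ ^ 2 + q.imK ^ 2) +
        (p.imI ^ 2 + p.imJ ^ 2 + p.imK ^ 2 - q.imI ^ 2 - q.imJ ^ 2 - q.imK ^ 2) ^ 2 := by
  rw [← LinearMap.det_toMatrix basisOneIJK, toMatrix_mulLeft_add_mulRight, det_fin_four_of]
  ring

end CommRing

theorem det_mulLeft_add_mulRight_nonneg {R : Type*} [CommRing R] [LinearOrder R]
    [IsStrictOrderedRing R] (p q : ℍ[R]) :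
    0 ≤ LinearMap.det (LinearMap.mulLeft R p + LinearMap.mulRight R q) := by
  rw [det_mulLeft_add_mulRight]
  positivity

end Quaternion

theorem stmt_4 (t x y z s u v w : ℝ) :
    LinearMap.det
        (LinearMap.mulLeft ℝ (⟨t, x, y, z⟩ : Quaternion ℝ) +
          LinearMap.mulRight ℝ (⟨s, u, v, w⟩ : Quaternion ℝ)) =
      (t + s) ^ 4 + 2 * (t + s) ^ 2 * (x ^ 2 + y ^ 2 + z ^ 2 + u ^ 2 + v ^ 2 + w ^ 2) +
        (x ^ 2 + y ^ 2 + z ^ 2 - u ^ 2 - v ^ 2 - w ^ 2) ^ 2 ∧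
      0 ≤ LinearMap.det
        (LinearMap.mulLeft ℝ (⟨t, x, y, z⟩ : Quaternion ℝ) +
          LinearMap.mulRight ℝ (⟨s, u, v, w⟩ : Quaternion ℝ)) :=
  ⟨det_mulLeft_add_mulRight _ _, det_mulLeft_add_mulRight_nonneg _ _⟩
end

section
/- The rank of the ℝ-linear map Σ : ℍ → ℍ given by Σ(X) = PX + XQ (for quaternions P, Q) is even; that is, it equals 0, 2, or 4. -/
/-!
If `X₀ ≠ 0` lies in the kernel of `Σ(X) = PX + XQ`, then `Q = -X₀⁻¹ P X₀`, and right
multiplication by `X₀` maps the centralizer of `P` onto `ker Σ`. So `ker Σ` is either `0` or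
isomorphic to the centralizer of `P`, which is all of `ℍ` when `P` is real and `ℝ[P] ≅ ℂ`
otherwise. Hence the nullity, and with it the rank, is even.
-/

open LinearMap Module

section DivisionRing

variable {K D : Type*} [Field K] [DivisionRing D] [Algebra K D]

theorem ker_mulLeft_add_mulRight_eq_map {P Q X₀ : D}
    (hX₀ : X₀ ∈ ker (mulLeft K P + mulRight K Q)) (hX₀_ne : X₀ ≠ 0) :
    ker (mulLeft K P + mulRight K Q) =
      (ker (mulLeft K P - mulRight K P)).map
        (Units.mulRightLinearEquiv K (Units.mk0 X₀ hX₀_ne)).toLinearMap := by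
  have hQ : X₀ * Q = -(P * X₀) := by
    simpa [eq_neg_iff_add_eq_zero, add_comm] using hX₀
  ext X
  rw [Submodule.mem_map_equiv]
  simp only [Units.symm_mulRightLinearEquiv, Units.mulRightLinearEquiv_apply,
    Units.val_inv_eq_inv_val, Units.val_mk0, mem_ker, LinearMap.add_apply, LinearMap.sub_apply,
    mulLeft_apply, mulRight_apply]
  have hfactor : P * X + X * Q = (P * (X * X₀⁻¹) - X * X₀⁻¹ * P) * X₀ := by
    rw [sub_mul, mul_assoc (X * X₀⁻¹), ← neg_neg (P * X₀), ← hQ]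
    simp [mul_assoc, hX₀_ne, sub_eq_add_neg]
  rw [hfactor, mul_eq_zero, or_iff_left hX₀_ne]

theorem finrank_ker_mulLeft_add_mulRight (P Q : D) :
    finrank K (ker (mulLeft K P + mulRight K Q)) = 0 ∨
      finrank K (ker (mulLeft K P + mulRight K Q)) =
        finrank K (ker (mulLeft K P - mulRight K P)) := by
  rcases eq_or_ne (ker (mulLeft K P + mulRight K Q)) ⊥ with h | h
  · left
    rw [h, finrank_bot]
  · right
    obtain ⟨X₀, hX₀, hX₀_ne⟩ := Submodule.ne_bot_iff _ |>.mp h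
    rw [ker_mulLeft_add_mulRight_eq_map hX₀ hX₀_ne, LinearEquiv.finrank_map_eq]

end DivisionRing

namespace Quaternion

open scoped Quaternion

theorem mem_span_one_of_commute {P Z : ℍ[ℝ]} (hP : P.im ≠ 0) (h : Commute P Z) :
    Z ∈ Submodule.span ℝ {1, P} := by
  have hP_im : P.im = P - ↑P.re := eq_sub_of_add_eq' (re_add_im P)
  have hZ_im : Z.im = Z - ↑Z.re := eq_sub_of_add_eq' (re_add_im Z)
  have him : Commute P.im Z.im := by
    rw [hP_im, hZ_im]
    exact (h.sub_left (coe_commute _ _)).sub_right (coe_commute _ _).symm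
  -- `star (v * w) = (-w) * (-v) = v * w` for commuting pure quaternions `v`, `w`
  obtain ⟨c, hc⟩ : ∃ c : ℝ, P.im * Z.im = c := by
    refine ⟨_, star_eq_self.mp ?_⟩
    rw [star_mul, star_im, star_im, neg_mul_neg, him.eq]
  have hZ : Z = ↑Z.re + (c * (normSq P.im)⁻¹) • (↑P.re - P) :=
    calc Z = ↑Z.re + P.im⁻¹ * c := by rw [← hc, inv_mul_cancel_left₀ hP, re_add_im]
      _ = _ := by rw [mul_coe_eq_smul, inv_def, star_im, mul_smul, hP_im, neg_sub]
  have hcoe : ∀ r : ℝ, (r : ℍ[ℝ]) ∈ Submodule.span ℝ {1, P} := fun r => by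
    rw [← mul_one (r : ℍ[ℝ]), coe_mul_eq_smul]
    exact Submodule.smul_mem _ r (Submodule.subset_span (by simp))
  rw [hZ]
  exact add_mem (hcoe _)
    (Submodule.smul_mem _ _ (sub_mem (hcoe _) (Submodule.subset_span (by simp))))

theorem ker_mulLeft_sub_mulRight_eq_span {P : ℍ[ℝ]} (hP : P.im ≠ 0) :
    ker (mulLeft ℝ P - mulRight ℝ P) = Submodule.span ℝ {1, P} := by
  refine le_antisymm (fun Z hZ => mem_span_one_of_commute hP (sub_eq_zero.mp hZ)) ?_
  rw [Submodule.span_le]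
  rintro Z (rfl | rfl) <;> simp

theorem finrank_span_one_pair {P : ℍ[ℝ]} (hP : P.im ≠ 0) :
    finrank ℝ (Submodule.span ℝ {1, P}) = 2 := by
  have hli : LinearIndependent ℝ ![1, P] := by
    refine (LinearIndependent.pair_iff' one_ne_zero).mpr fun a ha => hP ?_
    rw [← ha, im_smul, im_one, smul_zero]
  rw [← Matrix.range_cons_cons_empty 1 P ![], finrank_span_eq_card hli, Fintype.card_fin]

theorem finrank_ker_mulLeft_sub_mulRight (P : ℍ[ℝ]) :
    finrank ℝ (ker (mulLeft ℝ P - mulRight ℝ P)) = 2 ∨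
      finrank ℝ (ker (mulLeft ℝ P - mulRight ℝ P)) = 4 := by
  by_cases hP : P.im = 0
  · right
    have hP_re : (P.re : ℍ[ℝ]) = P := by simpa [hP] using re_add_im P
    have : mulLeft ℝ P - mulRight ℝ P = 0 := LinearMap.ext fun Z =>
      sub_eq_zero.mpr (hP_re ▸ coe_commutes P.re Z)
    rw [this, ker_zero, finrank_top, finrank_eq_four]
  · left
    rw [ker_mulLeft_sub_mulRight_eq_span hP, finrank_span_one_pair hP]

end Quaternion

theorem stmt_5 (P Q : Quaternion ℝ) :
    Module.finrank ℝ
        (LinearMap.range (LinearMap.mulLeft ℝ P + LinearMap.mulRight ℝ Q)) = 0 ∨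
    Module.finrank ℝ
        (LinearMap.range (LinearMap.mulLeft ℝ P + LinearMap.mulRight ℝ Q)) = 2 ∨
    Module.finrank ℝ
        (LinearMap.range (LinearMap.mulLeft ℝ P + LinearMap.mulRight ℝ Q)) = 4 := by
  have hrank := finrank_range_add_finrank_ker (mulLeft ℝ P + mulRight ℝ Q)
  rw [Quaternion.finrank_eq_four] at hrank
  rcases finrank_ker_mulLeft_add_mulRight (K := ℝ) P Q with h | h
  · omega
  · rcases Quaternion.finrank_ker_mulLeft_sub_mulRight P with h' | h' <;> omega
end

section
/- Let A, B ∈ ℍ be similar quaternions (same real part and same norm) that do not commute. Then the quadratic quaternionic equation λ² − (A+B)λ + AB = 0 has the unique solution λ = B. -/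
/-!
Put `x = λ - B`. Since the real parts of `A` and `B` agree and are central, the equation becomes
`x² = a x - x b` with `a = Im A`, `b = Im B`. Expanding `x³` in two ways gives
`x (a + b) x = a² x - x b²`, and `a² = b² = -|Im A|²` is real, so `x (a + b) x = 0`.
As `ℍ` is a division ring, `x = 0` or `a + b = 0`; the latter would make `A` and `B` commute.
-/

theorem sq_sub_add_mul_add_mul {R : Type*} [Ring R] (A B l : R) :
    l ^ 2 - (A + B) * l + A * B = (l - B) * (l - B) - (A * (l - B) - (l - B) * B) := by
  noncomm_ring

theorem mul_add_mul_eq_of_mul_self_eq {R : Type*} [Ring R] {a b x : R}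
    (h : x * x = a * x - x * b) : x * (a + b) * x = a * a * x - x * (b * b) := by
  have hleft : x * (x * x) = x * a * x - (a * x - x * b) * b :=
    calc x * (x * x) = x * (a * x - x * b) := by rw [h]
      _ = x * a * x - x * x * b := by noncomm_ring
      _ = x * a * x - (a * x - x * b) * b := by rw [h]
  have hright : x * x * x = a * (a * x - x * b) - x * b * x :=
    calc x * x * x = (a * x - x * b) * x := by rw [h]
      _ = a * (x * x) - x * b * x := by noncomm_ring
      _ = a * (a * x - x * b) - x * b * x := by rw [h]
  calc x * (a + b) * x = x * (x * x) + (a * x - x * b) * b + x * b * x := by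
        rw [hleft]; noncomm_ring
    _ = x * x * x + (a * x - x * b) * b + x * b * x := by rw [← mul_assoc x x x]
    _ = a * a * x - x * (b * b) := by rw [hright]; noncomm_ring

namespace Quaternion

theorem normSq_eq_re_sq_add_normSq_im (A : ℍ[ℝ]) : normSq A = A.re ^ 2 + normSq A.im := by
  simp only [normSq_def', re_im, imI_im, imJ_im, imK_im]
  ring

theorem im_mul_self_eq_of_re_eq_of_norm_eq {A B : ℍ[ℝ]} (hre : A.re = B.re) (hnorm : ‖A‖ = ‖B‖) :
    A.im * A.im = B.im * B.im := by
  have hnormSq : normSq A.im = normSq B.im := by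
    have h : normSq A = normSq B := by rw [normSq_eq_norm_mul_self, normSq_eq_norm_mul_self, hnorm]
    have hA := normSq_eq_re_sq_add_normSq_im A
    rw [hre] at hA
    linarith [normSq_eq_re_sq_add_normSq_im B]
  rw [← sq, ← sq, im_sq, im_sq, hnormSq]

theorem sq_sub_add_mul_add_mul_of_re_eq {A B : ℍ[ℝ]} (hre : A.re = B.re) (l : ℍ[ℝ]) :
    l ^ 2 - (A + B) * l + A * B =
      (l - B) * (l - B) - (A.im * (l - B) - (l - B) * B.im) := by
  rw [sq_sub_add_mul_add_mul]
  generalize l - B = x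
  calc x * x - (A * x - x * B) = x * x - ((↑B.re + A.im) * x - x * (↑B.re + B.im)) := by
        rw [← hre, re_add_im, hre, re_add_im]
    _ = x * x - (A.im * x - x * B.im) := by rw [add_mul, mul_add, coe_commutes]; abel

theorem im_add_im_ne_zero_of_mul_ne {A B : ℍ[ℝ]} (hcomm : A * B ≠ B * A) : A.im + B.im ≠ 0 := by
  intro h
  have hB : B = ↑(B.re + A.re) - A :=
    calc B = ↑B.re + B.im := (re_add_im B).symm
      _ = ↑B.re + ↑A.re - (↑A.re + A.im) := by rw [eq_neg_of_add_eq_zero_right h]; abel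
      _ = ↑(B.re + A.re) - A := by rw [re_add_im, coe_add]
  exact hcomm (hB ▸ ((coe_commute _ A).symm.sub_right (Commute.refl A)).eq)

end Quaternion

theorem stmt_7 (A B : Quaternion ℝ) (hre : A.re = B.re) (hnorm : ‖A‖ = ‖B‖)
    (hcomm : A * B ≠ B * A) (l : Quaternion ℝ) :
    l ^ 2 - (A + B) * l + A * B = 0 ↔ l = B := by
  refine ⟨fun h => ?_, fun h => by subst h; noncomm_ring⟩
  rw [Quaternion.sq_sub_add_mul_add_mul_of_re_eq hre, sub_eq_zero] at h
  have hsq : A.im * A.im = ((-Quaternion.normSq A.im : ℝ) : Quaternion ℝ) := by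
    rw [← sq, Quaternion.im_sq, Quaternion.coe_neg]
  have hzero := mul_add_mul_eq_of_mul_self_eq h
  rw [← Quaternion.im_mul_self_eq_of_re_eq_of_norm_eq hre hnorm, hsq, Quaternion.coe_commutes,
    sub_self] at hzero
  simpa [sub_eq_zero, Quaternion.im_add_im_ne_zero_of_mul_ne hcomm] using hzero
end

section
/- Let Q : ℍ → ℍ be continuous at 0 and suppose the limit l₀ = lim_{λ→0, λ≠0} λ·Q(λ)·λ⁻¹ exists. Then l₀ = Q(0). -/
/-!
Along the real axis λ = t the conjugation is trivial, t · Q(t) · t⁻¹ = Q(t), because real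
scalars are central. Restricting the limit to that direction, continuity of Q at 0 forces
l₀ = Q(0).
-/

open Filter Topology

theorem algebraMap_mul_mul_inv_cancel {𝕜 D : Type*} [Field 𝕜] [DivisionRing D] [Algebra 𝕜 D]
    {t : 𝕜} (ht : t ≠ 0) (q : D) :
    algebraMap 𝕜 D t * q * (algebraMap 𝕜 D t)⁻¹ = q := by
  rw [Algebra.commutes, mul_assoc, mul_inv_cancel₀ (by simpa using ht), mul_one]

section Normed

variable {𝕜 A : Type*} [NontriviallyNormedField 𝕜] [NormedDivisionRing A] [NormedAlgebra 𝕜 A]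

theorem tendsto_algebraMap_nhdsNE_zero :
    Tendsto (algebraMap 𝕜 A) (𝓝[≠] 0) (𝓝[≠] 0) :=
  tendsto_nhdsWithin_of_tendsto_nhds_of_eventually_within _
    (((continuous_algebraMap 𝕜 A).tendsto' 0 0 (map_zero _)).mono_left nhdsWithin_le_nhds)
    (eventually_nhdsWithin_of_forall fun t ht => by simpa using ht)

end Normed

theorem eq_of_tendsto_mul_mul_inv_nhdsNE_zero {A : Type*} [NormedDivisionRing A]
    [NormedAlgebra ℝ A] {Q : A → A} (hQ : ContinuousAt Q 0) {l₀ : A}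
    (hlim : Tendsto (fun l => l * Q l * l⁻¹) (𝓝[≠] 0) (𝓝 l₀)) : l₀ = Q 0 := by
  have hreal := tendsto_algebraMap_nhdsNE_zero (𝕜 := ℝ) (A := A)
  have hconj : Tendsto (fun t => Q (algebraMap ℝ A t)) (𝓝[≠] 0) (𝓝 l₀) :=
    (hlim.comp hreal).congr' <| eventually_nhdsWithin_of_forall fun t ht =>
      algebraMap_mul_mul_inv_cancel ht _
  exact tendsto_nhds_unique hconj (hQ.tendsto.comp (hreal.mono_right nhdsWithin_le_nhds))

theorem stmt_8 (Q : Quaternion ℝ → Quaternion ℝ) (hQ : ContinuousAt Q 0)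
    (l₀ : Quaternion ℝ)
    (hlim : Filter.Tendsto (fun l : Quaternion ℝ => l * Q l * l⁻¹)
      (nhdsWithin 0 {0}ᶜ) (nhds l₀)) :
    l₀ = Q 0 :=
  eq_of_tendsto_mul_mul_inv_nhdsNE_zero hQ hlim
end

section
/- Define Sdet(A) = (det c(A))^{1/2} for A ∈ M_n(ℍ), where A = X + jY with X, Y complex matrices and c(A) is the 2n×2n complex matrix [[X, −conj(Y)],[Y, conj(X)]]. Then Sdet is multiplicative: Sdet(AB) = Sdet(A)·Sdet(B) for all A, B ∈ M_n(ℍ). -/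
open Matrix

/-- The complex "X" part of a quaternion `q = X + jY`. -/
def qPartX (q : Quaternion ℝ) : ℂ := ⟨q.re, q.imI⟩

/-- The complex "Y" part of a quaternion `q = X + jY`. -/
def qPartY (q : Quaternion ℝ) : ℂ := ⟨q.imJ, -q.imK⟩

/-- The complex matrix `c(A) = [[X, -conj Y],[Y, conj X]]` associated to `A = X + jY`. -/
def cMat {m : Type} [Fintype m] [DecidableEq m] (A : Matrix m m (Quaternion ℝ)) :
    Matrix (m ⊕ m) (m ⊕ m) ℂ :=
  Matrix.fromBlocks (A.map qPartX) (A.map fun q => -(starRingEnd ℂ) (qPartY q))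
    (A.map qPartY) (A.map fun q => (starRingEnd ℂ) (qPartX q))

/-- Study's determinant `Sdet A = (det c(A))^(1/2)`. -/
noncomputable def Sdet {m : Type} [Fintype m] [DecidableEq m]
    (A : Matrix m m (Quaternion ℝ)) : ℝ :=
  Real.sqrt (cMat A).det.re

/-! `A ↦ c(A)` is multiplicative, so `det c` is multiplicative, and since `√` is multiplicative
on nonnegative reals it suffices that `det c(A)` is a nonnegative real. This goes by induction
on the size: after adding a row to the last one (which does not change `det c`), either the
last column vanishes or the last diagonal entry `q` is nonzero, and then the
quaternionic Schur complement `S` gives `det c(A) = |q|² det c(S)`. -/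

open scoped ComplexOrder Quaternion
open Sum

lemma qPartX_add (p q : ℍ) : qPartX (p + q) = qPartX p + qPartX q := by
  apply Complex.ext <;> simp [qPartX]

lemma qPartY_add (p q : ℍ) : qPartY (p + q) = qPartY p + qPartY q := by
  apply Complex.ext <;> simp [qPartY]; ring

lemma qPartX_sub (p q : ℍ) : qPartX (p - q) = qPartX p - qPartX q := by
  apply Complex.ext <;> simp [qPartX]

lemma qPartY_sub (p q : ℍ) : qPartY (p - q) = qPartY p - qPartY q := by
  apply Complex.ext <;> simp [qPartY]; ring

lemma qPartX_sum {ι : Type*} (s : Finset ι) (f : ι → ℍ) :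
    qPartX (∑ i ∈ s, f i) = ∑ i ∈ s, qPartX (f i) :=
  map_sum (AddMonoidHom.mk' qPartX qPartX_add) f s

lemma qPartY_sum {ι : Type*} (s : Finset ι) (f : ι → ℍ) :
    qPartY (∑ i ∈ s, f i) = ∑ i ∈ s, qPartY (f i) :=
  map_sum (AddMonoidHom.mk' qPartY qPartY_add) f s

lemma qPartX_mul (p q : ℍ) :
    qPartX (p * q) = qPartX p * qPartX q - starRingEnd ℂ (qPartY p) * qPartY q := by
  apply Complex.ext <;> simp [qPartX, qPartY, Quaternion.re_mul, Quaternion.imI_mul] <;> ring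

lemma qPartY_mul (p q : ℍ) :
    qPartY (p * q) = qPartY p * qPartX q + starRingEnd ℂ (qPartX p) * qPartY q := by
  apply Complex.ext <;> simp [qPartX, qPartY, Quaternion.imJ_mul, Quaternion.imK_mul] <;> ring

section cRect

variable {m n p : Type*}

def cRect (A : Matrix m n (ℍ)) : Matrix (m ⊕ m) (n ⊕ n) ℂ :=
  fromBlocks (A.map qPartX) (A.map fun q => -starRingEnd ℂ (qPartY q))
    (A.map qPartY) (A.map fun q => starRingEnd ℂ (qPartX q))

lemma cMat_eq_cRect {ι : Type} [Fintype ι] [DecidableEq ι] (A : Matrix ι ι (ℍ)) :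
    cMat A = cRect A := rfl

lemma cRect_sub (A B : Matrix m n (ℍ)) : cRect (A - B) = cRect A - cRect B := by
  ext (i | i) (j | j) <;>
    simp only [cRect, fromBlocks_apply₁₁, fromBlocks_apply₁₂, fromBlocks_apply₂₁,
      fromBlocks_apply₂₂, Matrix.map_apply, Matrix.sub_apply, qPartX_sub, qPartY_sub, map_sub,
      neg_sub, neg_sub_neg]

lemma cRect_one [DecidableEq m] : cRect (1 : Matrix m m (ℍ)) = 1 := by
  ext (i | i) (j | j) <;> by_cases h : i = j <;>
    simp [cRect, Matrix.one_apply, h, qPartX, qPartY, Complex.ext_iff]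

lemma cRect_mul [Fintype n] (A : Matrix m n (ℍ)) (B : Matrix n p (ℍ)) :
    cRect (A * B) = cRect A * cRect B := by
  simp only [cRect, fromBlocks_multiply]
  congr 1 <;> ext i j <;>
    simp only [Matrix.map_apply, Matrix.add_apply, Matrix.mul_apply, qPartX_sum, qPartY_sum,
      map_sum, qPartX_mul, qPartY_mul, ← Finset.sum_add_distrib, ← Finset.sum_neg_distrib] <;>
    refine Finset.sum_congr rfl fun k _ => ?_ <;>
    (try simp only [map_add, map_sub, map_mul, Complex.conj_conj]) <;> ring

lemma cRect_fromBlocks {q : Type*} (A : Matrix m n ℍ) (B : Matrix m q ℍ) (C : Matrix p n ℍ)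
    (D : Matrix p q ℍ) :
    cRect (fromBlocks A B C D) =
      (fromBlocks (cRect A) (cRect B) (cRect C) (cRect D)).submatrix
        (Equiv.sumSumSumComm m p m p) (Equiv.sumSumSumComm n q n q) := by
  ext ((i | i) | (i | i)) ((j | j) | (j | j)) <;> rfl

end cRect

section Determinant

variable {m p : Type} [Fintype m] [DecidableEq m] [Fintype p] [DecidableEq p]

lemma det_cMat_fromBlocks₂₂ (A : Matrix m m ℍ) (B : Matrix m p ℍ) (C : Matrix p m ℍ)
    (D D' : Matrix p p ℍ) (hDD' : D * D' = 1) (hD'D : D' * D = 1) :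
    (cMat (fromBlocks A B C D)).det = (cMat D).det * (cMat (A - B * D' * C)).det := by
  let _ : Invertible (cRect D) :=
    ⟨cRect D', by rw [← cRect_mul, hD'D, cRect_one], by rw [← cRect_mul, hDD', cRect_one]⟩
  rw [cMat_eq_cRect, cRect_fromBlocks, det_submatrix_equiv_self, det_fromBlocks₂₂,
    cMat_eq_cRect, cMat_eq_cRect, cRect_sub, cRect_mul, cRect_mul]
  rfl

lemma det_cMat_fin_one (Q : Matrix (Fin 1) (Fin 1) ℍ) :
    (cMat Q).det = Quaternion.normSq (Q 0 0) := by
  have h0 : finSumFinEquiv.symm (0 : Fin 2) = (inl 0 : Fin 1 ⊕ Fin 1) := rfl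
  have h1 : finSumFinEquiv.symm (1 : Fin 2) = (inr 0 : Fin 1 ⊕ Fin 1) := rfl
  rw [← det_reindex_self finSumFinEquiv, det_fin_two]
  apply Complex.ext <;>
    simp [h0, h1, cMat, qPartX, qPartY, Quaternion.normSq_def', -Complex.ofReal_pow] <;> ring

lemma cMat_mul (A B : Matrix m m ℍ) : cMat (A * B) = cMat A * cMat B :=
  cRect_mul A B

lemma cMat_one : cMat (1 : Matrix m m ℍ) = 1 :=
  cRect_one

lemma det_cMat_reindex (e : m ≃ p) (A : Matrix m m ℍ) :
    (cMat (reindex e e A)).det = (cMat A).det := by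
  have : cMat (reindex e e A) = reindex (e.sumCongr e) (e.sumCongr e) (cMat A) := by
    ext (i | i) (j | j) <;> rfl
  rw [this, det_reindex_self]

lemma det_cMat_eq_zero_of_column_eq_zero (A : Matrix m m ℍ) (j : m) (h : ∀ i, A i j = 0) :
    (cMat A).det = 0 :=
  det_eq_zero_of_column_eq_zero (inl j) fun i => by
    rcases i with i | i <;> simp [cMat, h, qPartX, qPartY, Complex.ext_iff]

lemma det_cMat_nonneg_of_pivot_ne_zero (ih : ∀ S : Matrix m m ℍ, 0 ≤ (cMat S).det)
    (A : Matrix (m ⊕ Fin 1) (m ⊕ Fin 1) ℍ) (hA : A (inr 0) (inr 0) ≠ 0) :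
    0 ≤ (cMat A).det := by
  let Q' : Matrix (Fin 1) (Fin 1) ℍ := of fun _ _ => (A (inr 0) (inr 0))⁻¹
  have hQQ' : toBlocks₂₂ A * Q' = 1 := Matrix.ext fun i j => by
    fin_cases i; fin_cases j; simp [Q', mul_apply, toBlocks₂₂, hA]
  have hQ'Q : Q' * toBlocks₂₂ A = 1 := Matrix.ext fun i j => by
    fin_cases i; fin_cases j; simp [Q', mul_apply, toBlocks₂₂, hA]
  rw [← fromBlocks_toBlocks A, det_cMat_fromBlocks₂₂ _ _ _ _ Q' hQQ' hQ'Q, det_cMat_fin_one]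
  exact mul_nonneg (Complex.zero_le_real.2 (Quaternion.normSq_nonneg)) (ih _)

lemma exists_det_cMat_eq_one_pivot_ne_zero (A : Matrix (m ⊕ Fin 1) (m ⊕ Fin 1) ℍ) (i : m)
    (hi : A (inl i) (inr 0) ≠ 0) (hA : A (inr 0) (inr 0) = 0) :
    ∃ T : Matrix (m ⊕ Fin 1) (m ⊕ Fin 1) ℍ,
      (cMat T).det = 1 ∧ (T * A) (inr 0) (inr 0) ≠ 0 := by
  refine ⟨fromBlocks 1 0 (single 0 i 1) 1, ?_, ?_⟩
  · rw [det_cMat_fromBlocks₂₂ _ _ _ _ 1 (mul_one 1) (mul_one 1)]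
    simp [cMat_one]
  · rw [← fromBlocks_toBlocks A, fromBlocks_multiply]
    simpa [toBlocks₁₂, toBlocks₂₂, hA] using hi

lemma det_cMat_nonneg_of_sum_fin_one (ih : ∀ S : Matrix m m ℍ, 0 ≤ (cMat S).det)
    (A : Matrix (m ⊕ Fin 1) (m ⊕ Fin 1) ℍ) : 0 ≤ (cMat A).det := by
  obtain hA | hA := ne_or_eq (A (inr 0) (inr 0)) 0
  · exact det_cMat_nonneg_of_pivot_ne_zero ih A hA
  by_cases hcol : ∀ i, A (inl i) (inr 0) = 0
  · refine (det_cMat_eq_zero_of_column_eq_zero A (inr 0) ?_).ge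
    rintro (i | i)
    · exact hcol i
    · rwa [Subsingleton.elim i 0]
  obtain ⟨i, hi⟩ := not_forall.1 hcol
  obtain ⟨T, hT, hTA⟩ := exists_det_cMat_eq_one_pivot_ne_zero A i hi hA
  simpa [cMat_mul, hT] using det_cMat_nonneg_of_pivot_ne_zero ih (T * A) hTA

end Determinant

theorem det_cMat_nonneg_fin : ∀ (k : ℕ) (A : Matrix (Fin k) (Fin k) ℍ), 0 ≤ (cMat A).det
  | 0, A => by simp
  | k + 1, A => by
    rw [← det_cMat_reindex finSumFinEquiv.symm A]
    exact det_cMat_nonneg_of_sum_fin_one (det_cMat_nonneg_fin k) _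

theorem det_cMat_nonneg {m : Type} [Fintype m] [DecidableEq m] (A : Matrix m m ℍ) :
    0 ≤ (cMat A).det := by
  rw [← det_cMat_reindex (Fintype.equivFin m)]
  exact det_cMat_nonneg_fin _ _

theorem Sdet_mul {m : Type} [Fintype m] [DecidableEq m] (A B : Matrix m m ℍ) :
    Sdet (A * B) = Sdet A * Sdet B := by
  obtain ⟨hA, hA'⟩ := Complex.nonneg_iff.1 (det_cMat_nonneg A)
  rw [Sdet, Sdet, Sdet, cMat_mul, det_mul, Complex.mul_re, ← hA', zero_mul, sub_zero,
    Real.sqrt_mul hA]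

theorem stmt_9 {n : ℕ} (A B : Matrix (Fin n) (Fin n) (Quaternion ℝ)) :
    Sdet (A * B) = Sdet A * Sdet B :=
  Sdet_mul A B
end

section
/- Let A = [[a, b],[c, d]] ∈ M_2(ℍ) with b ≠ 0, and define μ(λ) = c − (d−λ)b⁻¹(a−λ). Then λ ∈ ℍ is a left eigenvalue of A (i.e. there is a nonzero v ∈ ℍ² with Av = λv) if and only if μ(λ) = 0. -/
theorem stmt_17 (a b c d : Quaternion ℝ) (hb : b ≠ 0) (l : Quaternion ℝ) :
    (∃ v : Fin 2 → Quaternion ℝ, v ≠ 0 ∧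
        (Matrix.of ![![a, b], ![c, d]]).mulVec v = l • v) ↔
      c - (d - l) * b⁻¹ * (a - l) = 0 := by
  constructor
  · rintro ⟨v, hv, h⟩
    have h0 := congrFun h 0
    have h1 := congrFun h 1
    simp [Matrix.mulVec, dotProduct, Fin.sum_univ_two, smul_eq_mul] at h0 h1
    have hbv : b * v 1 = (l - a) * v 0 := by
      rw [sub_mul, ← h0]; noncomm_ring
    have hv1 : v 1 = b⁻¹ * ((l - a) * v 0) := by
      rw [← hbv, ← mul_assoc, inv_mul_cancel₀ hb, one_mul]
    have hv0 : v 0 ≠ 0 := by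
      intro hz
      apply hv
      funext i
      fin_cases i
      · exact hz
      · simp [hv1, hz]
    have key : (c - (d - l) * b⁻¹ * (a - l)) * v 0 = 0 := by
      have : c * v 0 + d * (b⁻¹ * ((l - a) * v 0)) = l * (b⁻¹ * ((l - a) * v 0)) := by
        rw [← hv1]; exact h1
      have e : (c - (d - l) * b⁻¹ * (a - l)) * v 0 =
          c * v 0 + d * (b⁻¹ * ((l - a) * v 0)) - l * (b⁻¹ * ((l - a) * v 0)) := by
        noncomm_ring
      rw [e, this, sub_self]
    rcases mul_eq_zero.mp key with h | h
    · exact h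
    · exact absurd h hv0
  · intro hμ
    rw [sub_eq_zero] at hμ
    refine ⟨![1, b⁻¹ * (l - a)], ?_, ?_⟩
    · intro hz
      have := congrFun hz 0
      simp at this
    · funext i
      fin_cases i
      · simp [Matrix.mulVec, dotProduct, Fin.sum_univ_two, smul_eq_mul,
          ← mul_assoc, mul_inv_cancel₀ hb]
      · have e : c * 1 + d * (b⁻¹ * (l - a)) = l * (b⁻¹ * (l - a)) := by
          rw [hμ]; noncomm_ring
        simpa [Matrix.mulVec, dotProduct, Fin.sum_univ_two, smul_eq_mul] using e
end
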